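/- arXiv:1512.06295 — 4 statements merged into one kernel-verified Lean document; each statement's English description precedes it below -/
import Mathlib

section
/- Consider the vector fields on ℝ⁴ (coordinates (l,h,t,V)): e₁ = e^{rt} ∂_l, e₂ = ∂_V, e₃ = l ∂_l + h ∂_h + (γV − (1−γ)·F(t)) ∂_V, where F is an antiderivative of the survival function Φ̄. Then the Lie brackets satisfy [e₂, e₃] = γ·e₂ and [e₁, e₃] = e₁, and [e₁, e₂] = 0. -/
open Real

/-- Lie bracket of vector fields on ℝ⁴, coefficientwise:
`[X,Y](p) = (DY)(p)(X p) − (DX)(p)(Y p)`. -/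
noncomputable def lieB (X Y : (Fin 4 → ℝ) → (Fin 4 → ℝ)) : (Fin 4 → ℝ) → (Fin 4 → ℝ) :=
  fun p => fderiv ℝ Y p (X p) - fderiv ℝ X p (Y p)

/-!
Against a constant field a bracket is a directional derivative: `[∂_V, e₃] = ∂_V(γV) ∂_V`, and
`e₁` does not depend on `V`. In `[e₁, e₃]` the term `e₁(e₃)` is `e^{rt} ∂_l` of the
coefficient `l`, while `e₃(e₁)` vanishes since `e₃` has no `∂_t`-component.
-/

open ContinuousLinearMap

theorem lieB_const_left (c : Fin 4 → ℝ) (Y : (Fin 4 → ℝ) → (Fin 4 → ℝ)) :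
    lieB (fun _ => c) Y = fun p => fderiv ℝ Y p c := by
  funext p
  simp only [lieB, fderiv_const_apply, zero_apply, sub_zero]

theorem lieB_const_right (X : (Fin 4 → ℝ) → (Fin 4 → ℝ)) (c : Fin 4 → ℝ) :
    lieB X (fun _ => c) = fun p => -fderiv ℝ X p c := by
  funext p
  simp only [lieB, fderiv_const_apply, zero_apply, zero_sub]

/-- `e^{rt} ∂_l` -/
noncomputable def expDl (r : ℝ) : (Fin 4 → ℝ) → (Fin 4 → ℝ) :=
  fun p => ![exp (r * p 2), 0, 0, 0]

/-- `∂_V` -/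
def partialV : (Fin 4 → ℝ) → (Fin 4 → ℝ) :=
  fun _ => ![0, 0, 0, 1]

/-- `l ∂_l + h ∂_h + (γV − (1−γ) F(t)) ∂_V` -/
def scalingField (γ : ℝ) (F : ℝ → ℝ) : (Fin 4 → ℝ) → (Fin 4 → ℝ) :=
  fun p => ![p 0, p 1, 0, γ * p 3 - (1 - γ) * F (p 2)]

theorem hasFDerivAt_expDl (r : ℝ) (p : Fin 4 → ℝ) :
    HasFDerivAt (expDl r)
      (pi (![exp (r * p 2) • r • proj 2, 0, 0, 0] : Fin 4 → (Fin 4 → ℝ) →L[ℝ] ℝ)) p := by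
  refine hasFDerivAt_pi.2 fun i => ?_
  fin_cases i
  · exact ((hasFDerivAt_apply 2 p).const_mul r).exp
  all_goals exact hasFDerivAt_const (0 : ℝ) p

theorem fderiv_expDl_apply (r : ℝ) (p v : Fin 4 → ℝ) :
    fderiv ℝ (expDl r) p v = ![exp (r * p 2) * (r * v 2), 0, 0, 0] := by
  rw [(hasFDerivAt_expDl r p).fderiv]
  ext i
  fin_cases i <;> simp

theorem hasFDerivAt_scalingField (γ : ℝ) {Φ F : ℝ → ℝ} (hF : ∀ t, HasDerivAt F (Φ t) t)
    (p : Fin 4 → ℝ) :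
    HasFDerivAt (scalingField γ F)
      (pi (![proj 0, proj 1, 0, γ • proj 3 - (1 - γ) • Φ (p 2) • proj 2] :
        Fin 4 → (Fin 4 → ℝ) →L[ℝ] ℝ)) p := by
  refine hasFDerivAt_pi.2 fun i => ?_
  fin_cases i
  · exact hasFDerivAt_apply 0 p
  · exact hasFDerivAt_apply 1 p
  · exact hasFDerivAt_const (0 : ℝ) p
  · exact ((hasFDerivAt_apply 3 p).const_mul γ).sub
      (((hF (p 2)).comp_hasFDerivAt p (hasFDerivAt_apply 2 p)).const_mul (1 - γ))

theorem fderiv_scalingField_apply (γ : ℝ) {Φ F : ℝ → ℝ} (hF : ∀ t, HasDerivAt F (Φ t) t)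
    (p v : Fin 4 → ℝ) :
    fderiv ℝ (scalingField γ F) p v = ![v 0, v 1, 0, γ * v 3 - (1 - γ) * (Φ (p 2) * v 2)] := by
  rw [(hasFDerivAt_scalingField γ hF p).fderiv]
  ext i
  fin_cases i <;> simp

theorem lieB_partialV_scalingField (γ : ℝ) {Φ F : ℝ → ℝ} (hF : ∀ t, HasDerivAt F (Φ t) t) :
    lieB partialV (scalingField γ F) = fun p => γ • partialV p := by
  unfold partialV
  rw [lieB_const_left]
  funext p
  rw [fderiv_scalingField_apply γ hF]
  ext i
  fin_cases i <;> simp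

theorem lieB_expDl_scalingField (r γ : ℝ) {Φ F : ℝ → ℝ} (hF : ∀ t, HasDerivAt F (Φ t) t) :
    lieB (expDl r) (scalingField γ F) = expDl r := by
  funext p
  rw [lieB, fderiv_scalingField_apply γ hF, fderiv_expDl_apply]
  ext i
  fin_cases i <;> simp [expDl, scalingField]

theorem lieB_expDl_partialV (r : ℝ) : lieB (expDl r) partialV = fun _ => 0 := by
  unfold partialV
  rw [lieB_const_right]
  funext p
  rw [fderiv_expDl_apply]
  ext i
  fin_cases i <;> simp

theorem brackets_L3_HARA_general (r γ : ℝ)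
    (Φ F : ℝ → ℝ) (hF : ∀ t, HasDerivAt F (Φ t) t) :
    let e₁ : (Fin 4 → ℝ) → (Fin 4 → ℝ) := fun p => ![Real.exp (r * p 2), 0, 0, 0]
    let e₂ : (Fin 4 → ℝ) → (Fin 4 → ℝ) := fun _ => ![0, 0, 0, 1]
    let e₃ : (Fin 4 → ℝ) → (Fin 4 → ℝ) :=
      fun p => ![p 0, p 1, 0, γ * p 3 - (1 - γ) * F (p 2)]
    lieB e₂ e₃ = (fun p => γ • e₂ p) ∧ lieB e₁ e₃ = e₁ ∧ lieB e₁ e₂ = fun _ => 0 :=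
  ⟨lieB_partialV_scalingField γ hF, lieB_expDl_scalingField r γ hF, lieB_expDl_partialV r⟩

/-- Commutator relations of the symmetry algebra L₃ for a general liquidation
time distribution: coordinates p = (l, h, t, V). -/
theorem brackets_L3_HARA (r γ : ℝ) (hγ0 : 0 < γ) (hγ1 : γ < 1)
    (Φ F : ℝ → ℝ) (hΦ : Continuous Φ) (hF : ∀ t, HasDerivAt F (Φ t) t) :
    let e₁ : (Fin 4 → ℝ) → (Fin 4 → ℝ) := fun p => ![Real.exp (r * p 2), 0, 0, 0]
    let e₂ : (Fin 4 → ℝ) → (Fin 4 → ℝ) := fun _ => ![0, 0, 0, 1]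
    let e₃ : (Fin 4 → ℝ) → (Fin 4 → ℝ) :=
      fun p => ![p 0, p 1, 0, γ * p 3 - (1 - γ) * F (p 2)]
    lieB e₂ e₃ = (fun p => γ • e₂ p) ∧ lieB e₁ e₃ = e₁ ∧ lieB e₁ e₂ = fun _ => 0 :=
  brackets_L3_HARA_general r γ Φ F hF
end

section
/- The vector fields e₁ = −l∂_l − h∂_h + F(t)∂_V, e₂ = e^{rt}∂_l, e₃ = −∂_V on ℝ⁴ (with F' = Φ̄) satisfy [e₁,e₂] = e₂, [e₁,e₃] = 0, and [e₂,e₃] = 0; hence the Lie algebra they span is isomorphic to A₁ ⊕ A₂ (the direct sum of the one-dimensional abelian algebra spanned by e₃ and the two-dimensional non-abelian algebra spanned by e₁, e₂). -/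
open Real

/-!
Each bracket is read off from how the fields behave along straight lines. `e₁` and `e₂` do not
depend on `V`, so they commute with the constant field `e₃`; `e₂` depends on `t` alone and `e₁`
has no `∂_t` component, so `e₂` is constant along `e₁`; finally, along the `l`-direction `e₁` is
affine with derivative `-∂_l`, so `[e₁, e₂] = 0 - (-e₂) = e₂`.
-/

section LineDerivative

variable {𝕜 : Type*} [NontriviallyNormedField 𝕜] {E F : Type*}
  [NormedAddCommGroup E] [NormedSpace 𝕜 E] [NormedAddCommGroup F] [NormedSpace 𝕜 F]
  {f : E → F} {p v : E} {w : F}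

theorem fderiv_apply_eq_of_add_smul (hf : DifferentiableAt 𝕜 f p)
    (h : ∀ t : 𝕜, f (p + t • v) = f p + t • w) : fderiv 𝕜 f p v = w := by
  rw [← hf.lineDeriv_eq_fderiv, lineDeriv, funext h, deriv_const_add]
  simpa using ((hasDerivAt_id (0 : 𝕜)).smul_const w).deriv

theorem fderiv_apply_eq_zero_of_add_smul (h : ∀ t : 𝕜, f (p + t • v) = f p) :
    fderiv 𝕜 f p v = 0 := by
  by_cases hf : DifferentiableAt 𝕜 f p
  · exact fderiv_apply_eq_of_add_smul hf (by simpa using h)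
  · simp [fderiv_zero_of_not_differentiableAt hf]

end LineDerivative

theorem lieB_const_eq_zero {X : (Fin 4 → ℝ) → (Fin 4 → ℝ)} {c : Fin 4 → ℝ}
    (hX : ∀ p (t : ℝ), X (p + t • c) = X p) : lieB X (fun _ => c) = fun _ => 0 := by
  funext p
  simp [lieB, fderiv_apply_eq_zero_of_add_smul (hX p)]

theorem brackets_L3_LOG_general (r : ℝ) (Φ F : ℝ → ℝ)
    (hF : ∀ t, HasDerivAt F (Φ t) t) :
    let e₁ : (Fin 4 → ℝ) → (Fin 4 → ℝ) := fun p => ![-(p 0), -(p 1), 0, F (p 2)]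
    let e₂ : (Fin 4 → ℝ) → (Fin 4 → ℝ) := fun p => ![Real.exp (r * p 2), 0, 0, 0]
    let e₃ : (Fin 4 → ℝ) → (Fin 4 → ℝ) := fun _ => ![0, 0, 0, -1]
    lieB e₁ e₂ = e₂ ∧ lieB e₁ e₃ = (fun _ => 0) ∧ lieB e₂ e₃ = (fun _ => 0) := by
  intro e₁ e₂ e₃
  have hF' : Differentiable ℝ F := fun t => (hF t).differentiableAt
  have he₁ : Differentiable ℝ e₁ :=
    differentiable_pi.2 fun i => by fin_cases i <;> simp [e₁] <;> fun_prop
  refine ⟨funext fun p => ?_, lieB_const_eq_zero fun p t => ?_, lieB_const_eq_zero fun p t => ?_⟩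
  · have he₂_along_e₁ : ∀ t : ℝ, e₂ (p + t • e₁ p) = e₂ p := by
      intro t; simp [e₁, e₂, Matrix.vecHead, Matrix.vecTail]
    have he₁_along_e₂ : ∀ t : ℝ, e₁ (p + t • e₂ p) = e₁ p + t • -e₂ p := by
      intro t; funext i; fin_cases i <;> simp [e₁, e₂, Matrix.vecHead, Matrix.vecTail]; ring
    simp only [lieB, fderiv_apply_eq_zero_of_add_smul he₂_along_e₁,
      fderiv_apply_eq_of_add_smul (he₁ p) he₁_along_e₂, zero_sub, neg_neg]
  · funext i; fin_cases i <;> simp [e₁, Matrix.vecHead, Matrix.vecTail]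
  · funext i; fin_cases i <;> simp [e₂, Matrix.vecHead, Matrix.vecTail]

/-- Commutator relations of the symmetry algebra L₃^{LOG} (type A₁ ⊕ A₂):
the only nonzero bracket is [e₁,e₂] = e₂, and e₃ is central. -/
theorem brackets_L3_LOG (r : ℝ) (Φ F : ℝ → ℝ) (hΦ : Continuous Φ)
    (hF : ∀ t, HasDerivAt F (Φ t) t) :
    let e₁ : (Fin 4 → ℝ) → (Fin 4 → ℝ) := fun p => ![-(p 0), -(p 1), 0, F (p 2)]
    let e₂ : (Fin 4 → ℝ) → (Fin 4 → ℝ) := fun p => ![Real.exp (r * p 2), 0, 0, 0]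
    let e₃ : (Fin 4 → ℝ) → (Fin 4 → ℝ) := fun _ => ![0, 0, 0, -1]
    lieB e₁ e₂ = e₂ ∧ lieB e₁ e₃ = (fun _ => 0) ∧ lieB e₂ e₃ = (fun _ => 0) :=
  brackets_L3_LOG_general r Φ F hF
end

section
/- For κ ≠ rγ, define e₁ = (rU₃ + U₄)/(κ−rγ), e₂ = U₁, e₃ = −(κU₃ + γU₄)/(κ−rγ), e₄ = U₂ in an abstract 4-dimensional Lie algebra whose only nonzero brackets among U₁,…,U₄ are [U₁,U₃] = γU₁, [U₁,U₄] = −κU₁, [U₂,U₃] = U₂, [U₂,U₄] = −rU₂. Then the only nonzero brackets among e₁,…,e₄ are [e₁,e₂] = e₂ and [e₃,e₄] = e₄; in particular the algebra is isomorphic to A₂ ⊕ A₂. -/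
/-! U₁ and U₂ are common eigenvectors of ad U₃ and ad U₄, so bracketing them with a combination
a U₃ + b U₄ multiplies them by weights linear in (a, b); e₁ and e₃ are the combinations on which
the weights of (U₁, U₂) are (-1, 0) and (0, -1). Brackets of two combinations of U₃, U₄ are multiples of
[U₃, U₄] = 0. -/

section

variable {R L : Type*} [CommRing R] [LieRing L] [LieAlgebra R L]

theorem lie_smul_add_smul_eq_of_lie_eq {u x y : L} {α β : R} (hx : ⁅u, x⁆ = α • u)
    (hy : ⁅u, y⁆ = β • u) (a b : R) : ⁅u, a • x + b • y⁆ = (a * α + b * β) • u := by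
  rw [lie_add, lie_smul, lie_smul, hx, hy, smul_smul, smul_smul, add_smul]

theorem lie_smul_add_smul_smul_add_smul (x y : L) (a b c d : R) :
    ⁅a • x + b • y, c • x + d • y⁆ = (a * d - b * c) • ⁅x, y⁆ := by
  simp only [lie_add, add_lie, lie_smul, smul_lie, lie_self, smul_zero]
  rw [← lie_skew x y]
  module

end

/-- Basis change in the abstract four-dimensional symmetry algebra for κ ≠ rγ:
in the new basis the only nonzero brackets are [e₁,e₂] = e₂ and [e₃,e₄] = e₄
(the structure of A₂ ⊕ A₂). -/
theorem new_basis_brackets (L : Type*) [LieRing L] [LieAlgebra ℝ L]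
    (r κ γ : ℝ) (hne : κ ≠ r * γ) (U₁ U₂ U₃ U₄ : L)
    (h13 : ⁅U₁, U₃⁆ = γ • U₁) (h14 : ⁅U₁, U₄⁆ = (-κ) • U₁)
    (h23 : ⁅U₂, U₃⁆ = U₂) (h24 : ⁅U₂, U₄⁆ = (-r) • U₂)
    (h12 : ⁅U₁, U₂⁆ = 0) (h34 : ⁅U₃, U₄⁆ = 0) :
    let e₁ : L := (κ - r * γ)⁻¹ • (r • U₃ + U₄)
    let e₂ : L := U₁
    let e₃ : L := -((κ - r * γ)⁻¹ • (κ • U₃ + γ • U₄))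
    let e₄ : L := U₂
    ⁅e₁, e₂⁆ = e₂ ∧ ⁅e₃, e₄⁆ = e₄ ∧ ⁅e₁, e₃⁆ = 0 ∧ ⁅e₁, e₄⁆ = 0 ∧
      ⁅e₂, e₃⁆ = 0 ∧ ⁅e₂, e₄⁆ = 0 := by
  intro e₁ e₂ e₃ e₄
  have hc : κ - r * γ ≠ 0 := sub_ne_zero.mpr hne
  have he₁ : e₁ = (κ - r * γ)⁻¹ • (r • U₃ + (1 : ℝ) • U₄) := by rw [one_smul]
  have he₃ : e₃ = (-(κ - r * γ)⁻¹) • (κ • U₃ + γ • U₄) := by rw [neg_smul]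
  have hU₁ := lie_smul_add_smul_eq_of_lie_eq h13 h14
  have hU₂ := lie_smul_add_smul_eq_of_lie_eq (h23.trans (one_smul ℝ U₂).symm) h24
  refine ⟨?_, ?_, ?_, ?_, ?_, h12⟩
  · rw [he₁, ← lie_skew, lie_smul, hU₁, smul_smul, ← neg_smul]
    convert one_smul ℝ e₂
    field_simp
    ring
  · rw [he₃, ← lie_skew, lie_smul, hU₂, smul_smul, ← neg_smul]
    convert one_smul ℝ e₄
    field_simp
    ring
  · rw [he₁, he₃, smul_lie, lie_smul, lie_smul_add_smul_smul_add_smul, h34]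
    simp only [smul_zero]
  · rw [he₁, ← lie_skew, lie_smul, hU₂]
    simp
  · rw [he₃, lie_smul, hU₁]
    simp [mul_comm]
end

section
/- The functions z = l/h, τ = (κ/γ)t − log h, and W = V + ((1−γ)/(γκ))e^{-κt} are invariants of the vector field X = −(κ/(κ−rγ))l∂_l − (κ/(κ−rγ))h∂_h − (γ/(κ−rγ))∂_t − ((1−γ)/(κ−rγ))e^{-κt}∂_V on the domain h > 0, i.e. X(z) = X(τ) = X(W) = 0. -/
open Real
noncomputable def Yop (cl ch ct cV : ℝ → ℝ → ℝ → ℝ → ℝ)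
    (G : ℝ → ℝ → ℝ → ℝ → ℝ) (l h t V : ℝ) : ℝ :=
  cl l h t V * deriv (fun x => G x h t V) l + ch l h t V * deriv (fun y => G l y t V) h +
    ct l h t V * deriv (fun s => G l h s V) t + cV l h t V * deriv (fun w => G l h t w) V

theorem Yop_eq_of_hasDerivAt {cl ch ct cV G : ℝ → ℝ → ℝ → ℝ → ℝ} {l h t V gl gh gt gV : ℝ}
    (hl : HasDerivAt (fun x => G x h t V) gl l) (hh : HasDerivAt (fun y => G l y t V) gh h)
    (ht : HasDerivAt (fun s => G l h s V) gt t) (hV : HasDerivAt (fun w => G l h t w) gV V) :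
    Yop cl ch ct cV G l h t V =
      cl l h t V * gl + ch l h t V * gh + ct l h t V * gt + cV l h t V * gV := by
  rw [Yop, hl.deriv, hh.deriv, ht.deriv, hV.deriv]

theorem Yop_div_eq_zero (a : ℝ) (ct cV : ℝ → ℝ → ℝ → ℝ → ℝ) {l h : ℝ} (t V : ℝ) (hh : h ≠ 0) :
    Yop (fun l _ _ _ => a * l) (fun _ h _ _ => a * h) ct cV (fun l h _ _ => l / h) l h t V = 0 := by
  have hl : HasDerivAt (fun x => x / h) (1 / h) l := (hasDerivAt_id l).div_const h
  have hh' : HasDerivAt (fun y => l / y) (-(l / h ^ 2)) h := by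
    simpa [div_eq_mul_inv] using (hasDerivAt_inv hh).const_mul l
  rw [Yop_eq_of_hasDerivAt hl hh' (hasDerivAt_const t _) (hasDerivAt_const V _)]
  field_simp
  ring

theorem Yop_mul_sub_log (a b c : ℝ) (cl cV : ℝ → ℝ → ℝ → ℝ → ℝ) (l : ℝ) {h : ℝ} (t V : ℝ)
    (hh : h ≠ 0) :
    Yop cl (fun _ h _ _ => a * h) (fun _ _ _ _ => b) cV (fun _ h t _ => c * t - log h) l h t V =
      b * c - a := by
  have hh' : HasDerivAt (fun y => c * t - log y) (0 - h⁻¹) h :=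
    (hasDerivAt_const h _).sub (hasDerivAt_log hh)
  have ht : HasDerivAt (fun s => c * s - log h) (c * 1) t :=
    ((hasDerivAt_id t).const_mul c).sub_const _
  rw [Yop_eq_of_hasDerivAt (hasDerivAt_const l _) hh' ht (hasDerivAt_const V _)]
  field_simp
  ring

theorem Yop_add_mul_exp (b k m κ : ℝ) (cl ch : ℝ → ℝ → ℝ → ℝ → ℝ) (l h t V : ℝ) :
    Yop cl ch (fun _ _ _ _ => b) (fun _ _ t _ => m * exp (-κ * t))
      (fun _ _ t V => V + k * exp (-κ * t)) l h t V = (m - b * k * κ) * exp (-κ * t) := by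
  have ht : HasDerivAt (fun s => V + k * exp (-κ * s)) (k * (exp (-κ * t) * (-κ * 1))) t :=
    (((hasDerivAt_id t).const_mul (-κ)).exp.const_mul k).const_add V
  rw [Yop_eq_of_hasDerivAt (hasDerivAt_const l _) (hasDerivAt_const h _) ht
    ((hasDerivAt_id V).add_const _)]
  ring

theorem invariants_H2_general (r κ γ : ℝ) (hκ : 0 < κ) (hγ0 : 0 < γ)
    (l h t V : ℝ) (hh : 0 < h) :
    let cl : ℝ → ℝ → ℝ → ℝ → ℝ := fun l _ _ _ => -(κ / (κ - r * γ)) * l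
    let ch : ℝ → ℝ → ℝ → ℝ → ℝ := fun _ h _ _ => -(κ / (κ - r * γ)) * h
    let ct : ℝ → ℝ → ℝ → ℝ → ℝ := fun _ _ _ _ => -(γ / (κ - r * γ))
    let cV : ℝ → ℝ → ℝ → ℝ → ℝ :=
      fun _ _ t _ => -((1 - γ) / (κ - r * γ)) * Real.exp (-κ * t)
    Yop cl ch ct cV (fun l h _ _ => l / h) l h t V = 0 ∧
    Yop cl ch ct cV (fun _ h t _ => (κ / γ) * t - Real.log h) l h t V = 0 ∧
    Yop cl ch ct cV
      (fun _ _ t V => V + ((1 - γ) / (γ * κ)) * Real.exp (-κ * t)) l h t V = 0 := by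
  intro cl ch ct cV
  refine ⟨Yop_div_eq_zero _ ct cV t V hh.ne', ?_, ?_⟩
  · rw [Yop_mul_sub_log _ _ _ cl cV l t V hh.ne']
    field_simp [hγ0.ne']
    ring
  · rw [Yop_add_mul_exp]
    field_simp [hγ0.ne', hκ.ne']
    ring

/-- z = l/h, τ = (κ/γ)t − log h and W = V + ((1−γ)/(γκ))e^{-κt} are invariants of
the field from the case H₂(h₂) of L₄^{HARA} (κ ≠ rγ) on the domain h > 0. -/
theorem invariants_H2 (r κ γ : ℝ) (hr : 0 < r) (hκ : 0 < κ) (hγ0 : 0 < γ) (hγ1 : γ < 1)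
    (hne : κ ≠ r * γ) (l h t V : ℝ) (hh : 0 < h) :
    let cl : ℝ → ℝ → ℝ → ℝ → ℝ := fun l _ _ _ => -(κ / (κ - r * γ)) * l
    let ch : ℝ → ℝ → ℝ → ℝ → ℝ := fun _ h _ _ => -(κ / (κ - r * γ)) * h
    let ct : ℝ → ℝ → ℝ → ℝ → ℝ := fun _ _ _ _ => -(γ / (κ - r * γ))
    let cV : ℝ → ℝ → ℝ → ℝ → ℝ :=
      fun _ _ t _ => -((1 - γ) / (κ - r * γ)) * Real.exp (-κ * t)
    Yop cl ch ct cV (fun l h _ _ => l / h) l h t V = 0 ∧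
    Yop cl ch ct cV (fun _ h t _ => (κ / γ) * t - Real.log h) l h t V = 0 ∧
    Yop cl ch ct cV
      (fun _ _ t V => V + ((1 - γ) / (γ * κ)) * Real.exp (-κ * t)) l h t V = 0 :=
  invariants_H2_general r κ γ hκ hγ0 l h t V hh
end
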